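/- With Kalman gain K = BHᵀ(HBHᵀ+R)⁻¹, the analysis covariance satisfies B − KHB = (I − KH)B, and (I − KH)B is symmetric positive semidefinite. -/

import Mathlib

/-!
Writing `S = HBHᵀ + R`, the gain satisfies `K S = BHᵀ`, and this alone gives Joseph's form
`(I − KH) B (I − KH)ᵀ + K R Kᵀ = (I − KH) B`: expanding the left side, `K S Kᵀ = B Hᵀ Kᵀ` cancels
the cross term. The right side is thus a congruence of `B` plus a congruence of `R`, hence positive
semidefinite.
-/

open Matrix

namespace Matrix

variable {𝕜 ι κ : Type*} [Fintype ι] [Fintype κ] [DecidableEq ι]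

theorem joseph_form [Ring 𝕜] [StarRing 𝕜] {B : Matrix ι ι 𝕜} {R : Matrix κ κ 𝕜}
    {H : Matrix κ ι 𝕜} {K : Matrix ι κ 𝕜} (hK : K * (H * B * Hᴴ + R) = B * Hᴴ) :
    (1 - K * H) * B * (1 - K * H)ᴴ + K * R * Kᴴ = (1 - K * H) * B := by
  have hKSK : K * H * B * Hᴴ * Kᴴ + K * R * Kᴴ = B * Hᴴ * Kᴴ := by
    rw [← hK]
    simp only [Matrix.mul_add, Matrix.add_mul, Matrix.mul_assoc]
  rw [conjTranspose_sub, conjTranspose_one, conjTranspose_mul]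
  calc (1 - K * H) * B * (1 - Hᴴ * Kᴴ) + K * R * Kᴴ
      = (1 - K * H) * B - B * Hᴴ * Kᴴ + (K * H * B * Hᴴ * Kᴴ + K * R * Kᴴ) := by
        simp only [Matrix.sub_mul, Matrix.mul_sub, Matrix.one_mul, Matrix.mul_one,
          Matrix.mul_assoc]
        abel
    _ = (1 - K * H) * B := by rw [hKSK, sub_add_cancel]

theorem PosSemidef.one_sub_mul_mul [Ring 𝕜] [PartialOrder 𝕜] [StarRing 𝕜] [AddLeftMono 𝕜]
    {B : Matrix ι ι 𝕜} {R : Matrix κ κ 𝕜} {H : Matrix κ ι 𝕜} {K : Matrix ι κ 𝕜}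
    (hB : B.PosSemidef) (hR : R.PosSemidef) (hK : K * (H * B * Hᴴ + R) = B * Hᴴ) :
    ((1 - K * H) * B).PosSemidef := by
  rw [← joseph_form hK]
  exact (hB.mul_mul_conjTranspose_same _).add (hR.mul_mul_conjTranspose_same _)

end Matrix

/-- With Kalman gain `K = BHᵀ(HBHᵀ+R)⁻¹`, the analysis covariance satisfies
`B − KHB = (I − KH)B`, and `(I − KH)B` is symmetric positive semidefinite. -/
theorem analysis_covariance_posSemidef {n m : ℕ}
    (B : Matrix (Fin n) (Fin n) ℝ) (R : Matrix (Fin m) (Fin m) ℝ)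
    (H : Matrix (Fin m) (Fin n) ℝ) (hB : B.PosDef) (hR : R.PosDef)
    (K : Matrix (Fin n) (Fin m) ℝ) (hK : K = B * Hᵀ * (H * B * Hᵀ + R)⁻¹) :
    B - K * H * B = (1 - K * H) * B ∧ ((1 - K * H) * B).PosSemidef := by
  simp only [← conjTranspose_eq_transpose_of_trivial] at hK
  have hS : (H * B * Hᴴ + R).PosDef :=
    PosDef.posSemidef_add (hB.posSemidef.mul_mul_conjTranspose_same H) hR
  have hKS : K * (H * B * Hᴴ + R) = B * Hᴴ := by
    rw [hK, nonsing_inv_mul_cancel_right _ _ hS.det_pos.ne'.isUnit]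
  exact ⟨by rw [sub_mul, one_mul], hB.posSemidef.one_sub_mul_mul hR.posSemidef hKS⟩
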